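/- arXiv:2405.00871 — 8 statements merged into one kernel-verified Lean document; each statement's English description precedes it below -/
import Mathlib

section
/- Let F : (ℕ→ℝ^n)×(ℕ→ℝ^m) → (ℕ→ℝ^n) be strictly causal in its joint argument with F(x,u)_0 = 0, and let M be a causal operator from ℝ^n-valued sequences to ℝ^m-valued sequences. Then for every state sequence x : ℕ→ℝ^n there exists a unique input sequence u : ℕ→ℝ^m satisfying u = M(x − F(x,u)); moreover, the resulting map K : x ↦ u is a causal operator. (Thus the internal-model-control law u_t = M_t(ŵ_{t:0}) with ŵ = x − F(x,u) is well defined and equivalent to a causal state-feedback controller u = K(x).) -/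
/-- An operator on sequences is causal if its output at time `t` depends only on
inputs up to time `t`. -/
def Causal {E F : Type*} (A : (ℕ → E) → (ℕ → F)) : Prop :=
  ∀ x y : ℕ → E, ∀ t : ℕ, (∀ s ≤ t, x s = y s) → A x t = A y t

/-- An operator on sequences is strictly causal if its output at time `t` depends only on
inputs strictly before time `t`. -/
def StrictlyCausal {E F : Type*} (A : (ℕ → E) → (ℕ → F)) : Prop :=
  ∀ x y : ℕ → E, ∀ t : ℕ, (∀ s < t, x s = y s) → A x t = A y t

/-- A two-argument operator on sequences is strictly causal in its joint argument. -/
def StrictlyCausal2 {E E' F : Type*} (A : (ℕ → E) → (ℕ → E') → (ℕ → F)) : Prop :=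
  ∀ x x' : ℕ → E, ∀ u u' : ℕ → E', ∀ t : ℕ,
    (∀ s < t, x s = x' s) → (∀ s < t, u s = u' s) → A x u t = A x' u' t

/-- A sequence belongs to `ℓ_p` if the `p`-th powers of the norms are summable. -/
def InLp (p : ℝ) {E : Type*} [Norm E] (x : ℕ → E) : Prop :=
  Summable fun t => ‖x t‖ ^ p

/-- The `ℓ_p` norm of a sequence. -/
noncomputable def lpNorm (p : ℝ) {E : Type*} [Norm E] (x : ℕ → E) : ℝ :=
  (∑' t, ‖x t‖ ^ p) ^ (1 / p)

/-- Auxiliary recursive construction of the fixed-point input sequence. -/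
noncomputable def fixedU {n m : ℕ}
    (F : (ℕ → Fin n → ℝ) → (ℕ → Fin m → ℝ) → (ℕ → Fin n → ℝ))
    (M : (ℕ → Fin n → ℝ) → (ℕ → Fin m → ℝ)) (x : ℕ → Fin n → ℝ) : ℕ → Fin m → ℝ
  | t => M (fun s => x s - F x (fun s' => if h : s' < t then fixedU F M x s' else 0) s) t

/-- Key comparison lemma: the value of `M (x - F x u)` at time `t` depends only on
`x` up to `t` and `u` strictly before `t`. -/
theorem imc_key {n m : ℕ}
    (F : (ℕ → Fin n → ℝ) → (ℕ → Fin m → ℝ) → (ℕ → Fin n → ℝ))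
    (hF : StrictlyCausal2 F)
    (M : (ℕ → Fin n → ℝ) → (ℕ → Fin m → ℝ)) (hM : Causal M)
    (x x' : ℕ → Fin n → ℝ) (u u' : ℕ → Fin m → ℝ) (t : ℕ)
    (hx : ∀ s ≤ t, x s = x' s) (hu : ∀ s < t, u s = u' s) :
    M (fun s => x s - F x u s) t = M (fun s => x' s - F x' u' s) t := by
  apply hM
  intro s hs
  have hFeq : F x u s = F x' u' s := by
    apply hF
    · intro r hr; exact hx r (le_of_lt (lt_of_lt_of_le hr hs))
    · intro r hr; exact hu r (lt_of_lt_of_le hr hs)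
  rw [hFeq, hx s hs]

theorem fixedU_fixed {n m : ℕ}
    (F : (ℕ → Fin n → ℝ) → (ℕ → Fin m → ℝ) → (ℕ → Fin n → ℝ))
    (hF : StrictlyCausal2 F)
    (M : (ℕ → Fin n → ℝ) → (ℕ → Fin m → ℝ)) (hM : Causal M)
    (x : ℕ → Fin n → ℝ) :
    fixedU F M x = M (fun t => x t - F x (fixedU F M x) t) := by
  funext t
  rw [fixedU]
  exact imc_key F hF M hM x x _ (fixedU F M x) t (fun s _ => rfl)
    (fun s hs => by simp [hs])

/-- For strictly causal `F` with `F(x,u)_0 = 0` and causal `M`, for every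
state sequence `x` there is a unique input `u` with `u = M(x − F(x,u))`, and the resulting
map `K : x ↦ u` is causal. -/
theorem imc_control_law_well_defined_and_causal {n m : ℕ}
    (F : (ℕ → Fin n → ℝ) → (ℕ → Fin m → ℝ) → (ℕ → Fin n → ℝ))
    (hF : StrictlyCausal2 F) (hF0 : ∀ x u, F x u 0 = 0)
    (M : (ℕ → Fin n → ℝ) → (ℕ → Fin m → ℝ)) (hM : Causal M) :
    (∀ x : ℕ → Fin n → ℝ, ∃! u : ℕ → Fin m → ℝ, u = M (fun t => x t - F x u t)) ∧
    (∀ x x' : ℕ → Fin n → ℝ, ∀ u u' : ℕ → Fin m → ℝ,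
      u = M (fun t => x t - F x u t) → u' = M (fun t => x' t - F x' u' t) →
      ∀ t : ℕ, (∀ s ≤ t, x s = x' s) → u t = u' t) := by
  have causal : ∀ x x' : ℕ → Fin n → ℝ, ∀ u u' : ℕ → Fin m → ℝ,
      u = M (fun t => x t - F x u t) → u' = M (fun t => x' t - F x' u' t) →
      ∀ t : ℕ, (∀ s ≤ t, x s = x' s) → u t = u' t := by
    intro x x' u u' hu hu' t
    induction t using Nat.strong_induction_on with
    | _ t ih =>
      intro hx
      rw [hu, hu']
      exact imc_key F hF M hM x x' u u' t hx
        (fun s hs => ih s hs (fun r hr => hx r (le_trans hr (le_of_lt hs))))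
  refine ⟨fun x => ⟨fixedU F M x, fixedU_fixed F hF M hM x, ?_⟩, causal⟩
  intro u hu
  funext t
  exact causal x x u (fixedU F M x) hu (fixedU_fixed F hF M hM x) t (fun _ _ => rfl)
end

section
/- (Theorem 1, part 1: nominal IMC stability.) Let p ∈ [1,∞). Let F : (ℕ→ℝ^n)×(ℕ→ℝ^m) → (ℕ→ℝ^n) be strictly causal in its joint argument with F(x,u)_0 = 0, and assume the associated transition operator 𝓕 : (u,w) ↦ x (the unique solution of x = F(x,u)+w) is ℓ_p-stable, i.e., x ∈ ℓ_p whenever u ∈ ℓ_p and w ∈ ℓ_p. Let M be a causal, ℓ_p-stable operator from ℝ^n-valued to ℝ^m-valued sequences. Then for every w ∈ ℓ_p, any pair of sequences (x,u) satisfying the closed-loop equations x = F(x,u)+w and u = M(x − F(x,u)) satisfies x ∈ ℓ_p and u ∈ ℓ_p. -/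
/-- **Theorem 1, part 1: nominal IMC stability.** If the transition operator of
the strictly causal plant `F` is `ℓ_p`-stable and `M` is a causal `ℓ_p`-stable operator, then
for every `w ∈ ℓ_p` the IMC closed-loop trajectories satisfy `x ∈ ℓ_p` and `u ∈ ℓ_p`. -/
theorem imc_nominal_stability {n m : ℕ} (p : ℝ) (hp : 1 ≤ p)
    (F : (ℕ → Fin n → ℝ) → (ℕ → Fin m → ℝ) → (ℕ → Fin n → ℝ))
    (hF : StrictlyCausal2 F) (hF0 : ∀ x u, F x u 0 = 0)
    (hFstable : ∀ (u : ℕ → Fin m → ℝ) (w x : ℕ → Fin n → ℝ),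
      (∀ t, x t = F x u t + w t) → InLp p u → InLp p w → InLp p x)
    (M : (ℕ → Fin n → ℝ) → (ℕ → Fin m → ℝ)) (hM : Causal M)
    (hMstable : ∀ v : ℕ → Fin n → ℝ, InLp p v → InLp p (M v)) :
    ∀ (w x : ℕ → Fin n → ℝ) (u : ℕ → Fin m → ℝ), InLp p w →
      (∀ t, x t = F x u t + w t) → u = M (fun t => x t - F x u t) →
      InLp p x ∧ InLp p u := by
  intro w x u hw hx hu
  have hwe : (fun t => x t - F x u t) = w := by
    funext t
    have := hx t
    rw [this]
    abel
  have hu' : InLp p u := by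
    rw [hu, hwe]; exact hMstable w hw
  exact ⟨hFstable u w x hx hu' hw, hu'⟩
end

section
/- (Theorem 1, part 2: completeness of the IMC parametrization.) Let F : (ℕ→ℝ^n)×(ℕ→ℝ^m) → (ℕ→ℝ^n) be strictly causal in its joint argument with F(x,u)_0 = 0. Let C be a causal controller (an operator from ℝ^n-valued to ℝ^m-valued sequences) and suppose Ψ^x, Ψ^u are the induced closed-loop maps: for every disturbance w, the sequences x = Ψ^x(w), u = Ψ^u(w) satisfy x = F(x,u)+w and u = C(x). Set M = Ψ^u. Then for every disturbance w, any pair (x',u') satisfying the IMC closed-loop equations x' = F(x',u')+w and u' = M(x' − F(x',u')) satisfies x' = Ψ^x(w) and u' = Ψ^u(w); in particular u' = C(x'), so the IMC controller with parameter M = Ψ^u coincides with C. -/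
/-- **Theorem 1, part 2: completeness of the IMC parametrization.** If `C` is a
causal controller with induced closed-loop maps `Ψˣ, Ψᵘ`, then the IMC controller with
parameter `M = Ψᵘ` reproduces exactly the closed-loop trajectories of `C`; in particular it
coincides with `C`. -/
theorem imc_parametrization_complete {n m : ℕ}
    (F : (ℕ → Fin n → ℝ) → (ℕ → Fin m → ℝ) → (ℕ → Fin n → ℝ))
    (hF : StrictlyCausal2 F) (hF0 : ∀ x u, F x u 0 = 0)
    (C : (ℕ → Fin n → ℝ) → (ℕ → Fin m → ℝ)) (hC : Causal C)
    (Ψx : (ℕ → Fin n → ℝ) → (ℕ → Fin n → ℝ))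
    (Ψu : (ℕ → Fin n → ℝ) → (ℕ → Fin m → ℝ))
    (hΨ : ∀ w : ℕ → Fin n → ℝ,
      (∀ t, Ψx w t = F (Ψx w) (Ψu w) t + w t) ∧ Ψu w = C (Ψx w)) :
    ∀ (w x' : ℕ → Fin n → ℝ) (u' : ℕ → Fin m → ℝ),
      (∀ t, x' t = F x' u' t + w t) →
      u' = Ψu (fun t => x' t - F x' u' t) →
      x' = Ψx w ∧ u' = Ψu w ∧ u' = C x' := by
  intro w x' u' hx' hu'
  have hw : (fun t => x' t - F x' u' t) = w := by
    funext t; rw [hx' t]; abel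
  rw [hw] at hu'
  have hΨw := hΨ w
  have hxeq : x' = Ψx w := by
    funext t
    induction t using Nat.strong_induction_on with
    | _ t ih =>
      rw [hx' t, hΨw.1 t, hF x' (Ψx w) u' (Ψu w) t (fun s hs => ih s hs)
        (fun s _ => by rw [hu'])]
  refine ⟨hxeq, hu', ?_⟩
  rw [hu', hΨw.2, hxeq]
end

section
/- (Corollary: nonlinear Youla-type parametrization for stable linear systems, sufficiency.) Let p ∈ [1,∞), let A ∈ ℝ^{n×n} have spectral radius strictly less than 1, and let B ∈ ℝ^{n×m}. Consider the linear plant x_0 = w_0, x_t = A x_{t−1} + B u_{t−1} + w_t for t ≥ 1, and let M be any causal, ℓ_p-stable operator from ℝ^n-valued to ℝ^m-valued sequences. Define the control input by ŵ_0 = x_0, ŵ_t = x_t − A x_{t−1} − B u_{t−1} for t ≥ 1, and u = M(ŵ). Then for every w ∈ ℓ_p the resulting closed-loop trajectories satisfy x ∈ ℓ_p and u ∈ ℓ_p. -/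
/-!
Since the plant model in the controller is exact, the reconstructed disturbance `ŵ` equals the
true disturbance `w`, so the loop is effectively open: `u = M w ∈ ℓ_p`. The state is then the
response of the plant to the `ℓ_p` input `t ↦ B u_{t-1} + w_t`, namely its convolution with the
kernel `k ↦ A ^ k`. By Gelfand's formula this kernel is summable when the spectral radius of `A`
is below one, and convolution with a summable kernel preserves `ℓ_p` (Young's inequality, which
follows from the weighted Hölder inequality).
-/

open Finset Filter Matrix
open scoped NNReal

attribute [local instance] Matrix.linftyOpNormedAddCommGroup Matrix.linftyOpNormedRing
  Matrix.linftyOpNormedAlgebra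

theorem summable_norm_pow_of_forall_mem_spectrum_norm_lt_one {A : Type*} [NormedRing A]
    [NormedAlgebra ℂ A] [CompleteSpace A] (a : A) (ha : ∀ z ∈ spectrum ℂ a, ‖z‖ < 1) :
    Summable fun k : ℕ => ‖a ^ k‖ := by
  cases subsingleton_or_nontrivial A with
  | inl _ => simp [Subsingleton.elim _ (0 : A)]
  | inr _ =>
    have hρ : spectralRadius ℂ a < (1 : ℝ≥0) :=
      spectrum.spectralRadius_lt_of_forall_lt a fun z hz => by exact_mod_cast ha z hz
    obtain ⟨r, hρr, hr1⟩ := ENNReal.lt_iff_exists_nnreal_btwn.1 hρ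
    refine Summable.of_norm_bounded_eventually_nat
      (summable_geometric_of_lt_one r.coe_nonneg (by exact_mod_cast hr1)) ?_
    have hgelfand :=
      (spectrum.pow_nnnorm_pow_one_div_tendsto_nhds_spectralRadius a).eventually_lt_const hρr
    filter_upwards [hgelfand, eventually_gt_atTop 0] with k hk hk0
    rw [one_div, ENNReal.rpow_inv_lt_iff (by positivity), ENNReal.rpow_natCast] at hk
    rw [norm_norm, ← coe_nnnorm, ← NNReal.coe_pow, NNReal.coe_le_coe]
    exact_mod_cast hk.le

theorem Matrix.linfty_opNorm_map_algebraMap {m n : Type*} [Fintype m] [Fintype n]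
    (A : Matrix m n ℝ) : ‖A.map (algebraMap ℝ ℂ)‖ = ‖A‖ := by
  simp [linfty_opNorm_def]

theorem Matrix.summable_norm_pow_of_spectrum_lt_one {n : Type*} [Fintype n] [DecidableEq n]
    (A : Matrix n n ℝ) (hA : ∀ μ ∈ spectrum ℂ (A.map (algebraMap ℝ ℂ)), ‖μ‖ < 1) :
    Summable fun k : ℕ => ‖A ^ k‖ := by
  have hpow (k : ℕ) : A.map (algebraMap ℝ ℂ) ^ k = (A ^ k).map (algebraMap ℝ ℂ) :=
    (map_pow (algebraMap ℝ ℂ).mapMatrix A k).symm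
  simpa only [hpow, linfty_opNorm_map_algebraMap] using
    summable_norm_pow_of_forall_mem_spectrum_norm_lt_one _ hA

theorem Matrix.eq_sum_pow_mulVec_of_forall_eq_mulVec_add {ι R : Type*} [Fintype ι]
    [DecidableEq ι] [Semiring R] (A : Matrix ι ι R) {x d : ℕ → ι → R} (hx0 : x 0 = d 0)
    (hx : ∀ t, x (t + 1) = A *ᵥ x t + d (t + 1)) (t : ℕ) :
    x t = ∑ k ∈ range (t + 1), (A ^ k) *ᵥ d (t - k) := by
  induction t with
  | zero => simp [hx0]
  | succ t ih =>
    rw [sum_range_succ', hx, ih, mulVec_sum]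
    simp [pow_succ', mulVec_mulVec, add_comm]

theorem Real.rpow_inner_le_weight_mul_Lp_of_nonneg {ι : Type*} (s : Finset ι) {p : ℝ}
    (hp : 1 ≤ p) (w f : ι → ℝ) (hw : ∀ i, 0 ≤ w i) (hf : ∀ i, 0 ≤ f i) :
    (∑ i ∈ s, w i * f i) ^ p ≤ (∑ i ∈ s, w i) ^ (p - 1) * ∑ i ∈ s, w i * f i ^ p := by
  have hp0 : 0 < p := by linarith
  have hW : 0 ≤ ∑ i ∈ s, w i := sum_nonneg fun i _ => hw i
  have hQ : 0 ≤ ∑ i ∈ s, w i * f i ^ p :=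
    sum_nonneg fun i _ => mul_nonneg (hw i) (rpow_nonneg (hf i) p)
  calc (∑ i ∈ s, w i * f i) ^ p
      ≤ ((∑ i ∈ s, w i) ^ (1 - p⁻¹) * (∑ i ∈ s, w i * f i ^ p) ^ p⁻¹) ^ p :=
        rpow_le_rpow (sum_nonneg fun i _ => mul_nonneg (hw i) (hf i))
          (inner_le_weight_mul_Lp_of_nonneg s hp w f hw hf) hp0.le
    _ = (∑ i ∈ s, w i) ^ (p - 1) * ∑ i ∈ s, w i * f i ^ p := by
        rw [mul_rpow (by positivity) (by positivity), ← rpow_mul hW, ← rpow_mul hQ,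
          inv_mul_cancel₀ hp0.ne', rpow_one, sub_mul, one_mul, inv_mul_cancel₀ hp0.ne']

section InLp

variable {E F : Type*} [NormedAddCommGroup E] [NormedAddCommGroup F] {p : ℝ}

theorem inLp_iff_memℓp (hp : 0 < p) {x : ℕ → E} :
    InLp p x ↔ Memℓp x (ENNReal.ofReal p) := by
  rw [memℓp_gen_iff (by rwa [ENNReal.toReal_ofReal hp.le]), ENNReal.toReal_ofReal hp.le, InLp]

theorem inLp_nat_add_iff {x : ℕ → E} (k : ℕ) : InLp p (fun t => x (t + k)) ↔ InLp p x :=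
  summable_nat_add_iff (f := fun t => ‖x t‖ ^ p) k

theorem InLp.of_norm_le_convolution (hp : 1 ≤ p) {a : ℕ → ℝ} (ha0 : ∀ k, 0 ≤ a k)
    (ha : Summable a) {b : ℕ → F} (hb : InLp p b) {y : ℕ → E}
    (hy : ∀ t, ‖y t‖ ≤ ∑ k ∈ range (t + 1), a k * ‖b (t - k)‖) : InLp p y := by
  have hconv : Summable fun t => ∑ k ∈ range (t + 1), a k * ‖b (t - k)‖ ^ p :=
    summable_sum_mul_range_of_summable_norm' (f := a) (g := fun k => ‖b k‖ ^ p)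
      (ha.congr fun k => (Real.norm_of_nonneg (ha0 k)).symm) ha
      (hb.congr fun k => (Real.norm_of_nonneg (by positivity)).symm) hb
  refine Summable.of_nonneg_of_le (fun t => by positivity) (fun t => ?_)
    (hconv.mul_left ((∑' k, a k) ^ (p - 1)))
  calc ‖y t‖ ^ p ≤ (∑ k ∈ range (t + 1), a k * ‖b (t - k)‖) ^ p :=
        Real.rpow_le_rpow (norm_nonneg _) (hy t) (by linarith)
    _ ≤ (∑ k ∈ range (t + 1), a k) ^ (p - 1) *
          ∑ k ∈ range (t + 1), a k * ‖b (t - k)‖ ^ p :=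
        Real.rpow_inner_le_weight_mul_Lp_of_nonneg _ hp a _ ha0 fun k => norm_nonneg _
    _ ≤ (∑' k, a k) ^ (p - 1) * ∑ k ∈ range (t + 1), a k * ‖b (t - k)‖ ^ p := by
        gcongr
        · exact sum_nonneg fun k _ => mul_nonneg (ha0 k) (by positivity)
        · exact sum_nonneg fun k _ => ha0 k
        · exact ha.sum_le_tsum _ fun k _ => ha0 k

end InLp

theorem inLp_state_of_inLp_input {ι κ : Type*} [Fintype ι] [DecidableEq ι] [Fintype κ]
    {p : ℝ} (hp : 1 ≤ p) (A : Matrix ι ι ℝ) (B : Matrix ι κ ℝ)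
    (hA : Summable fun k : ℕ => ‖A ^ k‖) {x w : ℕ → ι → ℝ} {u : ℕ → κ → ℝ}
    (hw : InLp p w) (hu : InLp p u) (hx0 : x 0 = w 0)
    (hx : ∀ t, x (t + 1) = A *ᵥ x t + B *ᵥ u t + w (t + 1)) : InLp p x := by
  let d : ℕ → ι → ℝ
    | 0 => w 0
    | s + 1 => B *ᵥ u s + w (s + 1)
  have hd : InLp p d := by
    refine (inLp_nat_add_iff 1).1 ?_
    change InLp p fun s => B *ᵥ u s + w (s + 1)
    have hw' := (inLp_nat_add_iff 1).2 hw
    rw [inLp_iff_memℓp (by linarith)] at hw' hu ⊢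
    exact Memℓp.add (f := fun s => B *ᵥ u s)
      ((hu.norm.const_mul ‖B‖).mono fun s => linfty_opNorm_mulVec B (u s)) hw'
  refine hd.of_norm_le_convolution hp (fun k => norm_nonneg _) hA fun t => ?_
  rw [A.eq_sum_pow_mulVec_of_forall_eq_mulVec_add (d := d) hx0
    (fun t => (hx t).trans (add_assoc ..)) t]
  exact (norm_sum_le _ _).trans (sum_le_sum fun k _ => linfty_opNorm_mulVec _ _)

theorem linear_youla_sufficiency_general {n m : ℕ} (p : ℝ) (hp : 1 ≤ p)
    (A : Matrix (Fin n) (Fin n) ℝ) (B : Matrix (Fin n) (Fin m) ℝ)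
    (hA : ∀ μ ∈ spectrum ℂ (A.map (algebraMap ℝ ℂ)), ‖μ‖ < 1)
    (M : (ℕ → Fin n → ℝ) → (ℕ → Fin m → ℝ))
    (hMstable : ∀ v : ℕ → Fin n → ℝ, InLp p v → InLp p (M v)) :
    ∀ (w x what : ℕ → Fin n → ℝ) (u : ℕ → Fin m → ℝ), InLp p w →
      x 0 = w 0 →
      (∀ t : ℕ, x (t + 1) = A.mulVec (x t) + B.mulVec (u t) + w (t + 1)) →
      what 0 = x 0 →
      (∀ t : ℕ, what (t + 1) = x (t + 1) - A.mulVec (x t) - B.mulVec (u t)) →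
      u = M what →
      InLp p x ∧ InLp p u := by
  intro w x what u hw hx0 hx hwhat0 hwhat hu
  have hwhat_eq : what = w := by
    funext t
    cases t with
    | zero => rw [hwhat0, hx0]
    | succ t => rw [hwhat t, hx t]; abel
  have hu_lp : InLp p u := hu ▸ hwhat_eq ▸ hMstable w hw
  exact ⟨inLp_state_of_inLp_input hp A B (A.summable_norm_pow_of_spectrum_lt_one hA) hw hu_lp
    hx0 hx, hu_lp⟩

/-- **Corollary: Youla-type parametrization for stable linear systems,
sufficiency.** For an asymptotically stable linear plant and any causal `ℓ_p`-stable
operator `M`, the IMC control law `u = M(ŵ)` with `ŵ_0 = x_0`,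
`ŵ_t = x_t − A x_{t−1} − B u_{t−1}` yields closed-loop trajectories in `ℓ_p` for every
`w ∈ ℓ_p`. -/
theorem linear_youla_sufficiency {n m : ℕ} (p : ℝ) (hp : 1 ≤ p)
    (A : Matrix (Fin n) (Fin n) ℝ) (B : Matrix (Fin n) (Fin m) ℝ)
    (hA : ∀ μ ∈ spectrum ℂ (A.map (algebraMap ℝ ℂ)), ‖μ‖ < 1)
    (M : (ℕ → Fin n → ℝ) → (ℕ → Fin m → ℝ)) (hM : Causal M)
    (hMstable : ∀ v : ℕ → Fin n → ℝ, InLp p v → InLp p (M v)) :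
    ∀ (w x what : ℕ → Fin n → ℝ) (u : ℕ → Fin m → ℝ), InLp p w →
      x 0 = w 0 →
      (∀ t : ℕ, x (t + 1) = A.mulVec (x t) + B.mulVec (u t) + w (t + 1)) →
      what 0 = x 0 →
      (∀ t : ℕ, what (t + 1) = x (t + 1) - A.mulVec (x t) - B.mulVec (u t)) →
      u = M what →
      InLp p x ∧ InLp p u :=
  linear_youla_sufficiency_general p hp A B hA M hMstable
end

section
/- (Small-gain arithmetic underlying Theorem 2.) Let γ_Δ, γ_F, γ_M be positive reals and a, b, c, d be nonnegative reals such that γ_M < γ_Δ^{-1}(γ_F + 1)^{-1}, and suppose a ≤ γ_Δ(c + b) + d, b ≤ γ_M a, and c ≤ γ_F(b + d). Then, with D := 1 − γ_Δ γ_M (γ_F + 1) > 0: a ≤ ((γ_Δ γ_F + 1)/D) d, b ≤ (γ_M (γ_Δ γ_F + 1)/D) d, and c ≤ (γ_F (1 + γ_M (1 − γ_Δ))/D) d. -/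
/-- **small-gain arithmetic underlying Theorem 2.** -/
theorem small_gain_arithmetic (γΔ γF γM a b c d : ℝ)
    (hγΔ : 0 < γΔ) (hγF : 0 < γF) (hγM : 0 < γM)
    (ha : 0 ≤ a) (hb : 0 ≤ b) (hc : 0 ≤ c) (hd : 0 ≤ d)
    (hsg : γM < γΔ⁻¹ * (γF + 1)⁻¹)
    (h1 : a ≤ γΔ * (c + b) + d) (h2 : b ≤ γM * a) (h3 : c ≤ γF * (b + d)) :
    0 < 1 - γΔ * γM * (γF + 1) ∧
    a ≤ ((γΔ * γF + 1) / (1 - γΔ * γM * (γF + 1))) * d ∧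
    b ≤ (γM * (γΔ * γF + 1) / (1 - γΔ * γM * (γF + 1))) * d ∧
    c ≤ (γF * (1 + γM * (1 - γΔ)) / (1 - γΔ * γM * (γF + 1))) * d := by
  have hD : 0 < 1 - γΔ * γM * (γF + 1) := by
    have h2' : γM * (γΔ * (γF + 1)) < 1 := by
      have := mul_lt_mul_of_pos_right hsg (by positivity : (0:ℝ) < γΔ * (γF + 1))
      calc γM * (γΔ * (γF + 1)) < γΔ⁻¹ * (γF + 1)⁻¹ * (γΔ * (γF + 1)) := this
        _ = 1 := by field_simp
    nlinarith
  have hc' := mul_le_mul_of_nonneg_left h3 hγΔ.le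
  have hb' := mul_le_mul_of_nonneg_left h2 (by positivity : (0:ℝ) ≤ γΔ * (γF + 1))
  have key : (1 - γΔ * γM * (γF + 1)) * a ≤ (γΔ * γF + 1) * d := by nlinarith
  have hA : a ≤ ((γΔ * γF + 1) / (1 - γΔ * γM * (γF + 1))) * d := by
    rw [div_mul_eq_mul_div, le_div_iff₀ hD]; linarith [key]
  refine ⟨hD, hA, ?_, ?_⟩
  · rw [div_mul_eq_mul_div, le_div_iff₀ hD]
    nlinarith [mul_le_mul_of_nonneg_left key hγM.le, mul_le_mul_of_nonneg_left h2 hD.le]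
  · rw [div_mul_eq_mul_div, le_div_iff₀ hD]
    nlinarith [mul_le_mul_of_nonneg_left key hγM.le, mul_le_mul_of_nonneg_left h2 hD.le,
      mul_le_mul_of_nonneg_right h3 hD.le,
      mul_le_mul_of_nonneg_left (mul_le_mul_of_nonneg_left key hγM.le) hγF.le,
      mul_le_mul_of_nonneg_left (mul_le_mul_of_nonneg_left h2 hD.le) hγF.le]
end

section
/- (Lemma in the proof of Theorem 2: bound on the reconstructed disturbance under model mismatch.) Let p ∈ [1,∞). Let F̂ and Δ be strictly causal operators (ℕ→ℝ^n)×(ℕ→ℝ^m) → (ℕ→ℝ^n) with F̂(x,u)_0 = Δ(x,u)_0 = 0, and let the true plant be F = F̂ + Δ. Assume: Δ has finite ℓ_p-gain γ_Δ > 0 in the sense ‖Δ(x,u)‖_p ≤ γ_Δ(‖x‖_p + ‖u‖_p) for all x ∈ ℓ_p, u ∈ ℓ_p; the true transition operator 𝓕 : (u,w) ↦ x (unique solution of x = F(x,u)+w) has finite ℓ_p-gain γ_F > 0 in the sense ‖𝓕(u,w)‖_p ≤ γ_F(‖u‖_p + ‖w‖_p); and M is a causal operator with finite ℓ_p-gain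 γ_M satisfying γ_M < γ_Δ^{-1}(γ_F + 1)^{-1}. Then for every w ∈ ℓ_p, the trajectories of the mismatched IMC closed loop (x = F(x,u)+w, ŵ = x − F̂(x,u), u = M(ŵ)) satisfy ŵ ∈ ℓ_p with ‖ŵ‖_p ≤ ((γ_Δ γ_F + 1)/(1 − γ_Δ γ_M (γ_F + 1))) ‖w‖_p. -/
/-! ### Auxiliary lemmas -/

/-- Unique solution of the strictly-causal fixed-point equation. -/
noncomputable def solAux {n m : ℕ}
    (Fh Δ : (ℕ → Fin n → ℝ) → (ℕ → Fin m → ℝ) → (ℕ → Fin n → ℝ))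
    (u : ℕ → Fin m → ℝ) (w : ℕ → Fin n → ℝ) (t : ℕ) : Fin n → ℝ :=
  Fh (fun s => if _h : s < t then solAux Fh Δ u w s else 0) u t +
    Δ (fun s => if _h : s < t then solAux Fh Δ u w s else 0) u t + w t
  termination_by t
  decreasing_by all_goals exact _h

lemma solAux_eq {n m : ℕ} {Fh Δ : (ℕ → Fin n → ℝ) → (ℕ → Fin m → ℝ) → (ℕ → Fin n → ℝ)}
    (hFh : StrictlyCausal2 Fh) (hΔ : StrictlyCausal2 Δ)
    (u : ℕ → Fin m → ℝ) (w : ℕ → Fin n → ℝ) (t : ℕ) :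
    solAux Fh Δ u w t = Fh (solAux Fh Δ u w) u t + Δ (solAux Fh Δ u w) u t + w t := by
  conv_lhs => rw [solAux]
  congr 1
  congr 1
  · exact hFh _ _ u u t (fun s hs => dif_pos hs) (fun _ _ => rfl)
  · exact hΔ _ _ u u t (fun s hs => dif_pos hs) (fun _ _ => rfl)

lemma solAux_agree {n m : ℕ} {Fh Δ : (ℕ → Fin n → ℝ) → (ℕ → Fin m → ℝ) → (ℕ → Fin n → ℝ)}
    (hFh : StrictlyCausal2 Fh) (hΔ : StrictlyCausal2 Δ)
    {x w w' : ℕ → Fin n → ℝ} {u u' : ℕ → Fin m → ℝ} (T : ℕ)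
    (hx : ∀ t, x t = Fh x u t + Δ x u t + w t)
    (hu : ∀ s ≤ T, u' s = u s) (hw : ∀ s ≤ T, w' s = w s) :
    ∀ t ≤ T, solAux Fh Δ u' w' t = x t := by
  intro t
  induction t using Nat.strong_induction_on with
  | _ t ih =>
    intro ht
    have hxagree : ∀ s < t, solAux Fh Δ u' w' s = x s :=
      fun s hs => ih s hs (le_trans hs.le ht)
    have huagree : ∀ s < t, u' s = u s := fun s hs => hu s (le_trans hs.le ht)
    rw [solAux_eq hFh hΔ, hx t, hFh _ _ _ _ t hxagree huagree,
      hΔ _ _ _ _ t hxagree huagree, hw t ht]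

lemma inLp_trunc {p : ℝ} (hp : 1 ≤ p) {E : Type*} [NormedAddCommGroup E]
    (f : ℕ → E) (T : ℕ) : InLp p (fun t => if t ≤ T then f t else 0) := by
  apply summable_of_ne_finset_zero (s := Finset.range (T + 1))
  intro t ht
  simp only [Finset.mem_range, not_lt] at ht
  have h0 : (if t ≤ T then f t else 0) = 0 := if_neg (by omega)
  simp only [h0]
  simp [Real.zero_rpow (by linarith : p ≠ 0)]

lemma lpNorm_nonneg (p : ℝ) {E : Type*} [NormedAddCommGroup E] (f : ℕ → E) : 0 ≤ lpNorm p f := by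
  unfold lpNorm
  exact Real.rpow_nonneg (tsum_nonneg fun t => Real.rpow_nonneg (norm_nonneg (f t)) p) _

lemma lpNorm_mono {p : ℝ} (hp : 1 ≤ p) {E F : Type*} [NormedAddCommGroup E]
    [NormedAddCommGroup F] {f : ℕ → E} {g : ℕ → F}
    (h : ∀ t, ‖f t‖ ≤ ‖g t‖) (hg : InLp p g) :
    InLp p f ∧ lpNorm p f ≤ lpNorm p g := by
  have hple : ∀ t, ‖f t‖ ^ p ≤ ‖g t‖ ^ p :=
    fun t => Real.rpow_le_rpow (norm_nonneg _) (h t) (by linarith)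
  have hf : InLp p f :=
    Summable.of_nonneg_of_le (fun t => Real.rpow_nonneg (norm_nonneg _) p) hple hg
  refine ⟨hf, Real.rpow_le_rpow (tsum_nonneg fun t => Real.rpow_nonneg (norm_nonneg _) p)
    (Summable.tsum_le_tsum hple hf hg) (by positivity)⟩

lemma lpNorm_add {p : ℝ} (hp : 1 ≤ p) {E : Type*} [NormedAddCommGroup E]
    {f g h : ℕ → E} (hfg : ∀ t, h t = f t + g t) (hf : InLp p f) (hg : InLp p g) :
    lpNorm p h ≤ lpNorm p f + lpNorm p g := by
  have key := Real.Lp_add_le_tsum_of_nonneg hp (fun t => norm_nonneg (f t))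
    (fun t => norm_nonneg (g t)) hf hg
  have hmono : ∀ t, ‖h t‖ ^ p ≤ (‖f t‖ + ‖g t‖) ^ p := fun t =>
    Real.rpow_le_rpow (norm_nonneg _) (by rw [hfg t]; exact norm_add_le _ _) (by linarith)
  have hh : InLp p h :=
    Summable.of_nonneg_of_le (fun t => Real.rpow_nonneg (norm_nonneg _) p) hmono key.1
  calc lpNorm p h ≤ (∑' t, (‖f t‖ + ‖g t‖) ^ p) ^ (1 / p) := by
        apply Real.rpow_le_rpow (tsum_nonneg fun t => Real.rpow_nonneg (norm_nonneg _) p)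
          (Summable.tsum_le_tsum hmono hh key.1) (by positivity)
    _ ≤ lpNorm p f + lpNorm p g := key.2

/-- **Lemma in the proof of Theorem 2.** Under the small-gain condition
`γ_M < γ_Δ⁻¹(γ_F + 1)⁻¹`, the reconstructed disturbance `ŵ` of the mismatched IMC closed loop
lies in `ℓ_p` and satisfies
`‖ŵ‖_p ≤ ((γ_Δ γ_F + 1)/(1 − γ_Δ γ_M (γ_F + 1))) ‖w‖_p`. -/
theorem robust_imc_reconstructed_disturbance_bound {n m : ℕ} (p : ℝ) (hp : 1 ≤ p)
    (Fhat Δ : (ℕ → Fin n → ℝ) → (ℕ → Fin m → ℝ) → (ℕ → Fin n → ℝ))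
    (hFhat : StrictlyCausal2 Fhat) (hΔsc : StrictlyCausal2 Δ)
    (hFhat0 : ∀ x u, Fhat x u 0 = 0) (hΔ0 : ∀ x u, Δ x u 0 = 0)
    (γΔ γF γM : ℝ) (hγΔ : 0 < γΔ) (hγF : 0 < γF) (hγM : 0 < γM)
    (hΔgain : ∀ (x : ℕ → Fin n → ℝ) (u : ℕ → Fin m → ℝ), InLp p x → InLp p u →
      InLp p (Δ x u) ∧ lpNorm p (Δ x u) ≤ γΔ * (lpNorm p x + lpNorm p u))
    (hFgain : ∀ (u : ℕ → Fin m → ℝ) (w x : ℕ → Fin n → ℝ),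
      (∀ t, x t = Fhat x u t + Δ x u t + w t) → InLp p u → InLp p w →
      InLp p x ∧ lpNorm p x ≤ γF * (lpNorm p u + lpNorm p w))
    (M : (ℕ → Fin n → ℝ) → (ℕ → Fin m → ℝ)) (hM : Causal M)
    (hMgain : ∀ v : ℕ → Fin n → ℝ, InLp p v →
      InLp p (M v) ∧ lpNorm p (M v) ≤ γM * lpNorm p v)
    (hsg : γM < γΔ⁻¹ * (γF + 1)⁻¹) :
    ∀ (w x what : ℕ → Fin n → ℝ) (u : ℕ → Fin m → ℝ), InLp p w →
      (∀ t, x t = Fhat x u t + Δ x u t + w t) →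
      (∀ t, what t = x t - Fhat x u t) →
      u = M what →
      InLp p what ∧
      lpNorm p what ≤ ((γΔ * γF + 1) / (1 - γΔ * γM * (γF + 1))) * lpNorm p w := by
  intro w x what u hwLp hx hwhat hu
  have hp0 : (0:ℝ) < p := by linarith
  set c : ℝ := γΔ * γM * (γF + 1) with hc
  have hGF1 : (0:ℝ) < γF + 1 := by linarith
  have hc1 : c < 1 := by
    have h1 : γM * (γΔ * (γF + 1)) < (γΔ⁻¹ * (γF + 1)⁻¹) * (γΔ * (γF + 1)) :=
      mul_lt_mul_of_pos_right hsg (by positivity)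
    have h2 : (γΔ⁻¹ * (γF + 1)⁻¹) * (γΔ * (γF + 1)) = 1 := by
      field_simp
    nlinarith
  have hcpos : 0 < c := by positivity
  have h1c : (0:ℝ) < 1 - c := by linarith
  set C : ℝ := ((γΔ * γF + 1) / (1 - c)) * lpNorm p w with hC
  have hwnn : 0 ≤ lpNorm p w := lpNorm_nonneg p w
  have hCnn : 0 ≤ C := by positivity
  -- key uniform bound on truncations
  have key : ∀ T : ℕ, ∑ t ∈ Finset.range (T + 1), ‖what t‖ ^ p ≤ C ^ p := by
    intro T
    set whatT : ℕ → Fin n → ℝ := fun t => if t ≤ T then what t else 0 with hwhatT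
    set wT : ℕ → Fin n → ℝ := fun t => if t ≤ T then w t else 0 with hwT
    have hwhatTLp : InLp p whatT := inLp_trunc hp what T
    have hwTLp : InLp p wT := inLp_trunc hp w T
    set u' : ℕ → Fin m → ℝ := M whatT with hu'
    obtain ⟨hu'Lp, hu'norm⟩ := hMgain whatT hwhatTLp
    -- u' agrees with u up to time T
    have hu'agree : ∀ s ≤ T, u' s = u s := by
      intro s hs
      rw [hu', hu]
      exact hM whatT what s (fun r hr => if_pos (le_trans hr hs))
    have hwTagree : ∀ s ≤ T, wT s = w s := fun s hs => if_pos hs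
    set x' : ℕ → Fin n → ℝ := solAux Fhat Δ u' wT with hx'
    have hx'eq : ∀ t, x' t = Fhat x' u' t + Δ x' u' t + wT t :=
      solAux_eq hFhat hΔsc u' wT
    obtain ⟨hx'Lp, hx'norm⟩ := hFgain u' wT x' hx'eq hu'Lp hwTLp
    have hx'agree : ∀ t ≤ T, x' t = x t :=
      solAux_agree hFhat hΔsc T hx hu'agree hwTagree
    obtain ⟨hΔLp, hΔnorm⟩ := hΔgain x' u' hx'Lp hu'Lp
    -- pointwise decomposition of the truncated what
    set ΔT : ℕ → Fin n → ℝ := fun t => if t ≤ T then Δ x' u' t else 0 with hΔT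
    have hΔTLp : InLp p ΔT := inLp_trunc hp (Δ x' u') T
    have hdecomp : ∀ t, whatT t = ΔT t + wT t := by
      intro t
      by_cases ht : t ≤ T
      · have hΔeq : Δ x u t = Δ x' u' t :=
          hΔsc x x' u u' t (fun s hs => (hx'agree s (le_trans hs.le ht)).symm)
            (fun s hs => (hu'agree s (le_trans hs.le ht)).symm)
        have : what t = Δ x u t + w t := by
          rw [hwhat t, hx t]; abel
        simp only [hwhatT, hΔT, hwT, if_pos ht]
        rw [this, hΔeq]
      · simp only [hwhatT, hΔT, hwT, if_neg ht, add_zero]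
    -- norm bounds
    have hΔTnorm : lpNorm p ΔT ≤ lpNorm p (Δ x' u') :=
      (lpNorm_mono hp (fun t => by
        by_cases ht : t ≤ T
        · simp [hΔT, if_pos ht]
        · simp [hΔT, if_neg ht, norm_nonneg]) hΔLp).2
    have hwTnorm : lpNorm p wT ≤ lpNorm p w :=
      (lpNorm_mono hp (fun t => by
        by_cases ht : t ≤ T
        · simp [hwT, if_pos ht]
        · simp [hwT, if_neg ht, norm_nonneg]) hwLp).2
    have htri : lpNorm p whatT ≤ lpNorm p ΔT + lpNorm p wT :=
      lpNorm_add hp hdecomp hΔTLp hwTLp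
    set a : ℝ := lpNorm p whatT with ha
    have hann : 0 ≤ a := lpNorm_nonneg p whatT
    have hu'nn : 0 ≤ lpNorm p u' := lpNorm_nonneg p u'
    have hx'nn : 0 ≤ lpNorm p x' := lpNorm_nonneg p x'
    have hwTnn : 0 ≤ lpNorm p wT := lpNorm_nonneg p wT
    -- chain of inequalities : a ≤ c * a + (γΔ γF + 1) ‖w‖
    have hchain : a ≤ c * a + (γΔ * γF + 1) * lpNorm p w := by
      have h1 : lpNorm p u' ≤ γM * a := hu'norm
      have h2 : lpNorm p x' ≤ γF * (lpNorm p u' + lpNorm p w) := by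
        refine le_trans hx'norm ?_
        have := hwTnorm
        nlinarith
      have h3 : lpNorm p (Δ x' u') ≤ γΔ * (lpNorm p x' + lpNorm p u') := hΔnorm
      have h4 : a ≤ lpNorm p (Δ x' u') + lpNorm p w := by
        refine le_trans htri ?_
        have := hΔTnorm
        have := hwTnorm
        linarith
      rw [hc]
      nlinarith [mul_le_mul_of_nonneg_left h2 hγΔ.le,
        mul_le_mul_of_nonneg_left h1 (by positivity : (0:ℝ) ≤ γΔ * (γF + 1))]
    have haC : a ≤ C := by
      rw [hC, div_mul_eq_mul_div, le_div_iff₀ h1c]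
      nlinarith
    -- convert to sum bound
    have hsum_eq : ∑ t ∈ Finset.range (T + 1), ‖what t‖ ^ p = ∑' t, ‖whatT t‖ ^ p := by
      rw [tsum_eq_sum (s := Finset.range (T + 1)) (f := fun t => ‖whatT t‖ ^ p)]
      · apply Finset.sum_congr rfl
        intro t ht
        simp only [Finset.mem_range] at ht
        rw [hwhatT]
        simp only [if_pos (by omega : t ≤ T)]
      · intro t ht
        simp only [Finset.mem_range, not_lt] at ht
        simp only [hwhatT, if_neg (by omega : ¬ t ≤ T)]
        simp [Real.zero_rpow (by linarith : p ≠ 0)]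
    have hpow : ∑' t, ‖whatT t‖ ^ p = a ^ p := by
      rw [ha, lpNorm, ← Real.rpow_mul
        (tsum_nonneg fun t => Real.rpow_nonneg (norm_nonneg _) p),
        one_div_mul_cancel (by linarith : p ≠ 0), Real.rpow_one]
    rw [hsum_eq, hpow]
    exact Real.rpow_le_rpow hann haC (by linarith)
  -- conclude summability and the norm bound
  have hnonneg : ∀ t, 0 ≤ ‖what t‖ ^ p := fun t => Real.rpow_nonneg (norm_nonneg _) p
  have hCn : (0:ℝ) ≤ C ^ p := Real.rpow_nonneg hCnn p
  have hrange : ∀ N, ∑ t ∈ Finset.range N, ‖what t‖ ^ p ≤ C ^ p := by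
    intro N
    cases N with
    | zero => simpa using hCn
    | succ T => exact key T
  have hsummable : Summable fun t => ‖what t‖ ^ p :=
    summable_of_sum_range_le hnonneg hrange
  refine ⟨hsummable, ?_⟩
  have htsum : ∑' t, ‖what t‖ ^ p ≤ C ^ p :=
    Summable.tsum_le_of_sum_range_le hsummable hrange
  calc lpNorm p what = (∑' t, ‖what t‖ ^ p) ^ (1 / p) := rfl
    _ ≤ (C ^ p) ^ (1 / p) :=
        Real.rpow_le_rpow (tsum_nonneg hnonneg) htsum (by positivity)
    _ = C := by
        rw [← Real.rpow_mul hCnn, mul_one_div, div_self (by linarith : p ≠ 0),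
          Real.rpow_one]
end

section
/- (Vanishing conservatism: the nominal case of Theorem 2.) Let p ∈ [1,∞). Let F : (ℕ→ℝ^n)×(ℕ→ℝ^m) → (ℕ→ℝ^n) be strictly causal in its joint argument with F(x,u)_0 = 0, whose transition operator 𝓕 : (u,w) ↦ x has finite ℓ_p-gain γ_F > 0 in the sense ‖𝓕(u,w)‖_p ≤ γ_F(‖u‖_p + ‖w‖_p), and let M be a causal operator with finite ℓ_p-gain γ_M (with no restriction on the size of γ_M). Then for every w ∈ ℓ_p, the trajectories of the exact-model IMC closed loop (x = F(x,u)+w, u = M(x − F(x,u))) satisfy ‖u‖_p ≤ γ_M ‖w‖_p and ‖x‖_p ≤ γ_F (1 + γ_M) ‖w‖_p. -/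
/-- **vanishing conservatism: the nominal case of Theorem 2.** With an exact
model, for any causal `M` of finite `ℓ_p`-gain `γ_M` (with no restriction on the size of
`γ_M`), the IMC closed-loop trajectories satisfy `‖u‖_p ≤ γ_M ‖w‖_p` and
`‖x‖_p ≤ γ_F (1 + γ_M) ‖w‖_p`. -/
theorem imc_nominal_gain_bounds {n m : ℕ} (p : ℝ) (hp : 1 ≤ p)
    (F : (ℕ → Fin n → ℝ) → (ℕ → Fin m → ℝ) → (ℕ → Fin n → ℝ))
    (hF : StrictlyCausal2 F) (hF0 : ∀ x u, F x u 0 = 0)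
    (γF γM : ℝ) (hγF : 0 < γF) (hγM : 0 < γM)
    (hFgain : ∀ (u : ℕ → Fin m → ℝ) (w x : ℕ → Fin n → ℝ),
      (∀ t, x t = F x u t + w t) → InLp p u → InLp p w →
      InLp p x ∧ lpNorm p x ≤ γF * (lpNorm p u + lpNorm p w))
    (M : (ℕ → Fin n → ℝ) → (ℕ → Fin m → ℝ)) (hM : Causal M)
    (hMgain : ∀ v : ℕ → Fin n → ℝ, InLp p v →
      InLp p (M v) ∧ lpNorm p (M v) ≤ γM * lpNorm p v) :
    ∀ (w x : ℕ → Fin n → ℝ) (u : ℕ → Fin m → ℝ), InLp p w →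
      (∀ t, x t = F x u t + w t) →
      u = M (fun t => x t - F x u t) →
      InLp p u ∧ InLp p x ∧
      lpNorm p u ≤ γM * lpNorm p w ∧
      lpNorm p x ≤ γF * (1 + γM) * lpNorm p w := by
  intro w x u hw hdyn hu
  have hres : (fun t => x t - F x u t) = w := by
    funext t; rw [hdyn t]; abel
  rw [hres] at hu
  obtain ⟨huLp, hunorm⟩ := hu ▸ hMgain w hw
  obtain ⟨hxLp, hxnorm⟩ := hFgain u w x hdyn huLp hw
  have hwnn : 0 ≤ lpNorm p w := by
    apply Real.rpow_nonneg
    exact tsum_nonneg fun t => Real.rpow_nonneg (norm_nonneg _) p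
  refine ⟨huLp, hxLp, hunorm, ?_⟩
  calc lpNorm p x ≤ γF * (lpNorm p u + lpNorm p w) := hxnorm
    _ ≤ γF * (γM * lpNorm p w + lpNorm p w) := by nlinarith
    _ = γF * (1 + γM) * lpNorm p w := by ring
end

section
/- (Proposition 1: decentralized IMC parameters yield distributed, stabilizing controllers.) Let p ∈ [1,∞). Consider N subsystems indexed by i ∈ {1,…,N}, with state dimensions n_i and input dimensions m_i, and a neighborhood map 𝒩 assigning to each i a set 𝒩_i ⊆ {1,…,N} with i ∈ 𝒩_i. Let F be a strictly causal operator on the stacked sequences (with F(x,u)_0 = 0) whose i-th block satisfies the network structure: the i-th block of F(x,u)_t depends only on the past values x^{[j]}_{t−1:0} for j ∈ 𝒩_i and u^{[i]}_{t−1:0}. Assume the transition operator 𝓕 : (u,w) ↦ x is ℓ_p-stable, and let M be a causal, ℓ_p-stable, decentralized operator, meaning the i-th block of M(ŵ)_t depends only on ŵ^{[i]}_{t:0}. Then: (1) for every w ∈ ℓ_p, the IMC closed-loop trajectories (x = F(x,u)+w, u = M(x − F(x,u))) satisfy x ∈ ℓ_p and u ∈ ℓ_p; and (2) the induced control policy is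 distributed: for any two pairs (x,u) and (x',u') each satisfying the controller equations u = M(x − F(x,u)) and u' = M(x' − F(x',u')), and any agent i and time t, if x^{[j]}_s = x'^{[j]}_s for all j ∈ 𝒩_i and all s ≤ t, then u^{[i]}_s = u'^{[i]}_s for all s ≤ t. -/
/-- **Proposition 1: decentralized IMC parameters yield distributed,
stabilizing controllers.** For a networked plant whose `i`-th block depends only on the
neighbors' past states and its own past inputs, any decentralized, causal, `ℓ_p`-stable IMC
parameter `M` yields `ℓ_p`-stable closed-loop trajectories, and the induced control policy is
distributed: the `i`-th input block up to time `t` depends only on neighboring state blocks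
up to time `t`. -/
theorem decentralized_imc_distributed_stabilizing {N : ℕ} (p : ℝ) (hp : 1 ≤ p)
    (n m : Fin N → ℕ) (𝒩 : Fin N → Finset (Fin N)) (h𝒩 : ∀ i, i ∈ 𝒩 i)
    (F : (ℕ → (i : Fin N) → Fin (n i) → ℝ) → (ℕ → (i : Fin N) → Fin (m i) → ℝ) →
      (ℕ → (i : Fin N) → Fin (n i) → ℝ))
    (hF0 : ∀ x u, F x u 0 = 0)
    (hFnet : ∀ x x' u u' t i,
      (∀ s < t, ∀ j ∈ 𝒩 i, x s j = x' s j) → (∀ s < t, u s i = u' s i) →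
      F x u t i = F x' u' t i)
    (hFstable : ∀ (u : ℕ → (i : Fin N) → Fin (m i) → ℝ)
        (w x : ℕ → (i : Fin N) → Fin (n i) → ℝ),
      (∀ t, x t = F x u t + w t) → InLp p u → InLp p w → InLp p x)
    (M : (ℕ → (i : Fin N) → Fin (n i) → ℝ) → (ℕ → (i : Fin N) → Fin (m i) → ℝ))
    (hMdec : ∀ v v' t i, (∀ s ≤ t, v s i = v' s i) → M v t i = M v' t i)
    (hMstable : ∀ v, InLp p v → InLp p (M v)) :
    (∀ (w x : ℕ → (i : Fin N) → Fin (n i) → ℝ) (u : ℕ → (i : Fin N) → Fin (m i) → ℝ),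
      InLp p w → (∀ t, x t = F x u t + w t) → u = M (fun t => x t - F x u t) →
      InLp p x ∧ InLp p u) ∧
    (∀ (x x' : ℕ → (i : Fin N) → Fin (n i) → ℝ)
        (u u' : ℕ → (i : Fin N) → Fin (m i) → ℝ),
      u = M (fun t => x t - F x u t) → u' = M (fun t => x' t - F x' u' t) →
      ∀ i t, (∀ j ∈ 𝒩 i, ∀ s ≤ t, x s j = x' s j) → ∀ s ≤ t, u s i = u' s i) := by
  constructor
  · intro w x u hw hx hu
    have hv : (fun t => x t - F x u t) = w := by
      funext t; rw [hx t]; abel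
    rw [hv] at hu
    have hu' : InLp p u := hu ▸ hMstable w hw
    exact ⟨hFstable u w x hx hu' hw, hu'⟩
  · intro x x' u u' hu hu' i t hx s hs
    induction s using Nat.strong_induction_on with
    | _ s ih =>
      have hFeq : ∀ r ≤ s, F x u r i = F x' u' r i := by
        intro r hr
        apply hFnet
        · intro q hq j hj
          exact hx j hj q ((hq.trans_le hr).le.trans hs)
        · intro q hq
          exact ih q (hq.trans_le hr) ((hq.trans_le hr).le.trans hs)
      rw [hu, hu']
      apply hMdec
      intro r hr
      show x r i - F x u r i = x' r i - F x' u' r i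
      rw [hFeq r hr, hx i (h𝒩 i) r (hr.trans hs)]
end
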